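/- arXiv:1601.02872 — 5 statements merged into one kernel-verified Lean document; each statement's English description precedes it below -/
import Mathlib

section
/- Let G be an ample Hausdorff groupoid and R a commutative ring with 1. Every element of the Steinberg algebra A_R(G) can be written as a finite R-linear combination Σ r_i · 1_{U_i} where the U_i are mutually disjoint compact open local bisections of G. -/
/-- A topological groupoid presented on its arrow space: `r`/`s` are the range and
source maps, `inv` is inversion, and `mul` is a (total) composition map whose
axioms are imposed only on composable pairs. -/
structure TopGroupoid (G : Type*) [TopologicalSpace G] where
  r : G → G
  s : G → G
  inv : G → G
  mul : G → G → G
  r_r : ∀ a, r (r a) = r a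
  s_r : ∀ a, s (r a) = r a
  r_s : ∀ a, r (s a) = s a
  s_s : ∀ a, s (s a) = s a
  mul_assoc' : ∀ a b c, s a = r b → s b = r c → mul (mul a b) c = mul a (mul b c)
  r_mul : ∀ a b, s a = r b → r (mul a b) = r a
  s_mul : ∀ a b, s a = r b → s (mul a b) = s b
  unit_mul : ∀ a, mul (r a) a = a
  mul_unit : ∀ a, mul a (s a) = a
  r_inv : ∀ a, r (inv a) = s a
  s_inv : ∀ a, s (inv a) = r a
  inv_inv' : ∀ a, inv (inv a) = a
  mul_inv : ∀ a, mul a (inv a) = r a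
  inv_mul : ∀ a, mul (inv a) a = s a
  continuous_r : Continuous r
  continuous_s : Continuous s
  continuous_inv : Continuous inv
  continuousOn_mul : ContinuousOn (fun p : G × G => mul p.1 p.2) {p | s p.1 = r p.2}

namespace TopGroupoid

variable {G : Type*} [TopologicalSpace G] (S : TopGroupoid G)

/-- The unit space `G⁽⁰⁾ = {γγ⁻¹ : γ ∈ G}`. -/
def unitSpace : Set G := Set.range S.r

/-- The groupoid is étale if range and source are local homeomorphisms. -/
def Etale : Prop := IsLocalHomeomorph S.r ∧ IsLocalHomeomorph S.s

/-- The groupoid is ample if it is étale and the unit space has a basis of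
compact open sets. -/
def Ample : Prop :=
  S.Etale ∧ ∀ u ∈ S.unitSpace, ∀ U : Set G, IsOpen U → u ∈ U →
    ∃ K : Set G, IsCompact K ∧ IsOpen K ∧ u ∈ K ∧ K ⊆ U ∧ K ⊆ S.unitSpace

/-- A (local) bisection: a set on which `r` and `s` are injective. (For open sets
in an étale groupoid this is equivalent to `r` and `s` restricting to
homeomorphisms onto open subsets of the unit space.) -/
def IsBisection (U : Set G) : Prop := Set.InjOn S.r U ∧ Set.InjOn S.s U

/-- A compact open local bisection, i.e. an element of the inverse semigroup `S_G`. -/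
def IsCOB (U : Set G) : Prop := IsCompact U ∧ IsOpen U ∧ S.IsBisection U

/-- Setwise product `UV = {αβ : α ∈ U, β ∈ V, s α = r β}`. -/
def setMul (U V : Set G) : Set G :=
  {g | ∃ a ∈ U, ∃ b ∈ V, S.s a = S.r b ∧ g = S.mul a b}

/-- Setwise inverse `U⁻¹ = {γ⁻¹ : γ ∈ U}`. -/
def setInv (U : Set G) : Set G := S.inv '' U

/-- A unit has trivial isotropy if the only arrow from it to itself is itself. -/
def TrivialIsotropyAt (u : G) : Prop := ∀ γ : G, S.r γ = u → S.s γ = u → γ = u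

/-- Topologically principal: the units with trivial isotropy are dense in the
unit space. -/
def TopPrincipal : Prop :=
  ∀ U : Set G, IsOpen U → (U ∩ S.unitSpace).Nonempty →
    ∃ u ∈ U ∩ S.unitSpace, S.TrivialIsotropyAt u

/-- Membership in the Steinberg algebra: locally constant with compact support. -/
def IsSteinbergFn {R : Type*} [Zero R] (f : G → R) : Prop :=
  IsLocallyConstant f ∧ IsCompact (Function.support f)

/-- The convolution product on `R`-valued functions on `G`:
`(f * g)(γ) = Σ_{αβ = γ} f(α) g(β)`. -/
noncomputable def conv {R : Type*} [Semiring R] (f g : G → R) : G → R :=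
  fun γ => ∑ᶠ p : {q : G × G // S.s q.1 = S.r q.2 ∧ S.mul q.1 q.2 = γ},
    f (p : G × G).1 * g (p : G × G).2

/-- The indicator function of a set, as an `R`-valued function. -/
noncomputable def ind {R : Type*} [Zero R] [One R] (U : Set G) : G → R := U.indicator 1

end TopGroupoid

open TopGroupoid in
/-- In an ample groupoid, every point has arbitrarily small compact open
bisection neighborhoods. -/
theorem exists_cob_nhd {G : Type*} [TopologicalSpace G]
    (S : TopGroupoid G) (hS : S.Ample) {γ : G} {O : Set G} (hO : IsOpen O) (hγ : γ ∈ O) :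
    ∃ K, S.IsCOB K ∧ γ ∈ K ∧ K ⊆ O := by
  obtain ⟨⟨hr, hs⟩, hb⟩ := hS
  obtain ⟨e, heγ, her⟩ := hr γ
  obtain ⟨e', he'γ, hes⟩ := hs γ
  set W : Set G := O ∩ e.source ∩ e'.source with hWdef
  have hWopen : IsOpen W := (hO.inter e.open_source).inter e'.open_source
  have hγW : γ ∈ W := ⟨⟨hγ, heγ⟩, he'γ⟩
  have hWsrc : W ⊆ e.source := fun x hx => hx.1.2
  have hWsrc' : W ⊆ e'.source := fun x hx => hx.2
  have himg : IsOpen (e '' W) := e.isOpen_image_of_subset_source hWopen hWsrc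
  have hrγ : S.r γ ∈ e '' W := ⟨γ, hγW, by rw [her]⟩
  obtain ⟨K, hKcpt, hKopen, hγK, hKsub, -⟩ :=
    hb (S.r γ) ⟨γ, rfl⟩ (e '' W) himg hrγ
  have hKtarget : K ⊆ e.target := fun k hk => by
    obtain ⟨w, hw, rfl⟩ := hKsub hk
    exact e.map_source (hWsrc hw)
  refine ⟨W ∩ S.r ⁻¹' K, ⟨?_, ?_, ?_, ?_⟩, ⟨hγW, by rwa [Set.mem_preimage]⟩,
    fun x hx => hx.1.1.1⟩
  · -- compact
    have hEq : W ∩ S.r ⁻¹' K = e.symm '' K := by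
      ext x
      constructor
      · rintro ⟨hxW, hxK⟩
        refine ⟨S.r x, hxK, ?_⟩
        rw [her] at hxK ⊢
        exact e.left_inv (hWsrc hxW)
      · rintro ⟨k, hk, rfl⟩
        obtain ⟨w, hw, rfl⟩ := hKsub hk
        rw [e.left_inv (hWsrc hw)]
        refine ⟨hw, ?_⟩
        rw [Set.mem_preimage, her]
        exact hk
    rw [hEq]
    exact hKcpt.image_of_continuousOn (e.continuousOn_symm.mono hKtarget)
  · exact hWopen.inter (hKopen.preimage S.continuous_r)
  · rw [her]
    exact e.injOn.mono (fun x hx => hWsrc hx.1)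
  · rw [hes]
    exact e'.injOn.mono (fun x hx => hWsrc' hx.1)

open TopGroupoid in
/-- Every element of the Steinberg algebra of an ample Hausdorff
groupoid is a finite `R`-linear combination of indicator functions of mutually
disjoint compact open local bisections. -/
theorem steinberg_spanned_by_bisections {G : Type*} [TopologicalSpace G] [T2Space G]
    (S : TopGroupoid G) (hS : S.Ample) {R : Type*} [CommRing R]
    (f : G → R) (hf : IsSteinbergFn f) :
    ∃ (n : ℕ) (c : Fin n → R) (U : Fin n → Set G),
      (∀ i, S.IsCOB (U i)) ∧
      (∀ i j, i ≠ j → Disjoint (U i) (U j)) ∧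
      f = fun γ => ∑ i : Fin n, c i * ind (U i) γ := by
  classical
  obtain ⟨hlc, hcpt⟩ := hf
  -- Step 1: choose a compact open bisection neighborhood of each point of the support,
  -- on which `f` is constant.
  have hstep : ∀ x ∈ Function.support f, ∃ K, S.IsCOB K ∧ x ∈ K ∧ K ⊆ f ⁻¹' {f x} := by
    intro x hx
    exact exists_cob_nhd S hS (hlc.isOpen_fiber (f x)) rfl
  choose! V hVcob hVmem hVsub using hstep
  -- Step 2: extract a finite subcover of the support.
  obtain ⟨t, htsub, hcover⟩ := hcpt.elim_nhds_subcover V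
    (fun x hx => (hVcob x hx).2.1.mem_nhds (hVmem x hx))
  -- Step 3: disjointify by taking "atoms" indexed by nonempty subsets of `t`.
  set W : Finset G → Set G := fun A =>
    if A.Nonempty ∧ A ⊆ t then (⋂ i ∈ A, V i) \ (⋃ i ∈ t \ A, V i) else ∅ with hWdef
  have hWmem : ∀ A γ, γ ∈ W A → A.Nonempty ∧ A ⊆ t ∧ ∀ i ∈ t, (i ∈ A ↔ γ ∈ V i) := by
    intro A γ hγ
    simp only [hWdef] at hγ
    by_cases h : A.Nonempty ∧ A ⊆ t
    · rw [if_pos h] at hγ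
      obtain ⟨h1, h2⟩ := hγ
      refine ⟨h.1, h.2, fun i hi => ⟨fun hiA => ?_, fun hiV => ?_⟩⟩
      · simp only [Set.mem_iInter] at h1
        exact h1 i hiA
      · by_contra hiA
        exact h2 (Set.mem_biUnion (Finset.mem_sdiff.mpr ⟨hi, hiA⟩) hiV)
    · rw [if_neg h] at hγ
      exact absurd hγ (Set.notMem_empty γ)
  have hVclosed : ∀ x ∈ t, IsClosed (V x) :=
    fun x hx => (hVcob x (htsub x hx)).1.isClosed
  -- each atom is a compact open bisection
  have hWcob : ∀ A, S.IsCOB (W A) := by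
    intro A
    simp only [hWdef]
    by_cases h : A.Nonempty ∧ A ⊆ t
    · rw [if_pos h]
      obtain ⟨⟨i₀, hi₀⟩, hAt⟩ := h
      have hIcpt : IsCompact (⋂ i ∈ A, V i) := by
        refine IsCompact.of_isClosed_subset (hVcob i₀ (htsub i₀ (hAt hi₀))).1 ?_ ?_
        · exact isClosed_biInter fun i hi => hVclosed i (hAt hi)
        · exact Set.biInter_subset_of_mem hi₀
      have hUclosed : IsClosed (⋃ i ∈ t \ A, V i) := by
        refine Set.Finite.isClosed_biUnion (Finset.finite_toSet _) ?_
        intro i hi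
        exact hVclosed i (Finset.mem_sdiff.mp hi).1
      have hIopen : IsOpen (⋂ i ∈ A, V i) := by
        refine Set.Finite.isOpen_biInter (Finset.finite_toSet _) ?_
        intro i hi
        exact (hVcob i (htsub i (hAt hi))).2.1
      have hUopen : IsOpen (⋃ i ∈ t \ A, V i) := by
        refine isOpen_biUnion ?_
        intro i hi
        exact (hVcob i (htsub i (Finset.mem_sdiff.mp hi).1)).2.1
      refine ⟨hIcpt.of_isClosed_subset (hIcpt.isClosed.sdiff hUopen)
        Set.diff_subset, hIopen.sdiff hUclosed, ?_, ?_⟩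
      · exact (hVcob i₀ (htsub i₀ (hAt hi₀))).2.2.1.mono
          ((Set.diff_subset).trans (Set.biInter_subset_of_mem hi₀))
      · exact (hVcob i₀ (htsub i₀ (hAt hi₀))).2.2.2.mono
          ((Set.diff_subset).trans (Set.biInter_subset_of_mem hi₀))
    · rw [if_neg h]
      exact ⟨isCompact_empty, isOpen_empty,
        fun x hx => absurd hx (Set.notMem_empty x),
        fun x hx => absurd hx (Set.notMem_empty x)⟩
  -- atoms are determined by their points, hence pairwise disjoint
  have hWeq : ∀ A γ, γ ∈ W A → A = t.filter (fun i => γ ∈ V i) := by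
    intro A γ hγ
    obtain ⟨-, hAt, hiff⟩ := hWmem A γ hγ
    ext i
    simp only [Finset.mem_filter]
    constructor
    · intro hiA
      exact ⟨hAt hiA, (hiff i (hAt hiA)).mp hiA⟩
    · rintro ⟨hit, hiV⟩
      exact (hiff i hit).mpr hiV
  have hWdisj : ∀ A B, A ≠ B → Disjoint (W A) (W B) := by
    intro A B hAB
    rw [Set.disjoint_left]
    intro γ hγA hγB
    exact hAB ((hWeq A γ hγA).trans (hWeq B γ hγB).symm)
  -- the coefficient attached to each atom
  set c : Finset G → R := fun A => if h : (W A).Nonempty then f h.choose else 0 with hcdef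
  have hWsubV : ∀ A, ∀ i ∈ A, W A ⊆ V i := by
    intro A i hi γ hγ
    obtain ⟨-, hAt, hiff⟩ := hWmem A γ hγ
    exact (hiff i (hAt hi)).mp hi
  have hconst : ∀ A, ∀ γ ∈ W A, f γ = c A := by
    intro A γ hγ
    have hne : (W A).Nonempty := ⟨γ, hγ⟩
    rw [hcdef]
    simp only [dif_pos hne]
    obtain ⟨⟨i₀, hi₀⟩, hAt, -⟩ := hWmem A γ hγ
    have h1 : f γ = f i₀ := hVsub i₀ (htsub i₀ (hAt hi₀)) (hWsubV A i₀ hi₀ hγ)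
    have h2 : f hne.choose = f i₀ :=
      hVsub i₀ (htsub i₀ (hAt hi₀)) (hWsubV A i₀ hi₀ hne.choose_spec)
    rw [h1, h2]
  -- the decomposition over atoms
  have hsum : ∀ γ, f γ = ∑ A ∈ t.powerset, c A * (W A).indicator 1 γ := by
    intro γ
    by_cases hγ : ∃ x ∈ t, γ ∈ V x
    · obtain ⟨x, hxt, hxV⟩ := hγ
      set A₀ : Finset G := t.filter (fun i => γ ∈ V i) with hA₀
      have hγW : γ ∈ W A₀ := by
        simp only [hWdef]
        rw [if_pos ⟨⟨x, Finset.mem_filter.mpr ⟨hxt, hxV⟩⟩, Finset.filter_subset _ _⟩]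
        constructor
        · exact Set.mem_biInter fun i hi => (Finset.mem_filter.mp hi).2
        · intro hmem
          obtain ⟨i, hi, hiV⟩ := Set.mem_iUnion₂.mp hmem
          obtain ⟨hit, hiA⟩ := Finset.mem_sdiff.mp hi
          exact hiA (Finset.mem_filter.mpr ⟨hit, hiV⟩)
      rw [Finset.sum_eq_single A₀]
      · rw [Set.indicator_of_mem hγW, Pi.one_apply, mul_one]
        exact hconst A₀ γ hγW
      · intro B hB hBA
        have : γ ∉ W B := fun hγB => hBA (hWeq B γ hγB)
        rw [Set.indicator_of_notMem this, mul_zero]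
      · intro h
        exact absurd (Finset.mem_powerset.mpr (Finset.filter_subset _ _)) h
    · push_neg at hγ
      have hf0 : f γ = 0 := by
        by_contra h
        obtain ⟨i, hi⟩ := Set.mem_iUnion₂.mp (hcover h)
        exact hγ i hi.1 hi.2
      rw [hf0]
      refine (Finset.sum_eq_zero ?_).symm
      intro A hA
      have : γ ∉ W A := by
        intro hγW
        obtain ⟨⟨i₀, hi₀⟩, hAt, -⟩ := hWmem A γ hγW
        exact hγ i₀ (hAt hi₀) (hWsubV A i₀ hi₀ hγW)
      rw [Set.indicator_of_notMem this, mul_zero]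
  -- Step 4: reindex by `Fin n`.
  set s : Finset (Finset G) := t.powerset with hsdef
  refine ⟨s.card, fun i => c (s.equivFin.symm i), fun i => W (s.equivFin.symm i),
    fun i => hWcob _, ?_, ?_⟩
  · intro i j hij
    refine hWdisj _ _ ?_
    intro h
    exact hij (s.equivFin.symm.injective (Subtype.ext h))
  · funext γ
    rw [hsum γ]
    have := Equiv.sum_comp s.equivFin.symm
      (fun a : s => c (a : Finset G) * (W (a : Finset G)).indicator 1 γ)
    simp only [TopGroupoid.ind]
    rw [← Finset.sum_coe_sort s (fun A => c A * (W A).indicator 1 γ)]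
    exact this.symm
end

section
/- Let G be a topologically principal ample Hausdorff groupoid and R a commutative integral domain with 1. Then the diagonal D = A_R(G^(0)) is a maximal abelian subring of the Steinberg algebra A_R(G): for every f ∈ A_R(G) with f ∉ D there exists a compact open W ⊆ G^(0) with f * 1_W ≠ 1_W * f. -/
namespace TopGroupoid

variable {G : Type*} [TopologicalSpace G] (S : TopGroupoid G)

lemma r_of_unit' {u : G} (hu : u ∈ S.unitSpace) : S.r u = u := by
  obtain ⟨x, rfl⟩ := hu; exact S.r_r x

lemma s_of_unit' {u : G} (hu : u ∈ S.unitSpace) : S.s u = u := by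
  obtain ⟨x, rfl⟩ := hu; exact S.s_r x

lemma conv_ind_right' {R : Type*} [CommRing R] (f : G → R) {W : Set G}
    (hW : W ⊆ S.unitSpace) (γ : G) :
    S.conv f (ind W) γ = f γ * ind W (S.s γ) := by
  have h1 : S.s γ = S.r (S.s γ) := (S.r_s γ).symm
  have h2 : S.mul γ (S.s γ) = γ := S.mul_unit γ
  refine finsum_eq_single _ (⟨(γ, S.s γ), h1, h2⟩ :
      {q : G × G // S.s q.1 = S.r q.2 ∧ S.mul q.1 q.2 = γ}) ?_
  rintro ⟨⟨a, b⟩, hab, habγ⟩ hne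
  by_cases hb : b ∈ W
  · exfalso
    have hbu : b ∈ S.unitSpace := hW hb
    have hrb : S.r b = b := S.r_of_unit' hbu
    have hsa : S.s a = b := by rw [hab, hrb]
    have hm : S.mul a b = a := by rw [← hsa, S.mul_unit]
    have haγ : a = γ := by rw [← habγ, hm]
    have hbsγ : b = S.s γ := by rw [← haγ, ← hsa]
    exact hne (Subtype.ext (by simp [haγ, hbsγ]))
  · simp only [ind, Set.indicator_of_notMem hb, mul_zero]

lemma conv_ind_left' {R : Type*} [CommRing R] (f : G → R) {W : Set G}
    (hW : W ⊆ S.unitSpace) (γ : G) :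
    S.conv (ind W) f γ = ind W (S.r γ) * f γ := by
  have h1 : S.s (S.r γ) = S.r γ := S.s_r γ
  have h2 : S.mul (S.r γ) γ = γ := S.unit_mul γ
  refine finsum_eq_single _ (⟨(S.r γ, γ), h1, h2⟩ :
      {q : G × G // S.s q.1 = S.r q.2 ∧ S.mul q.1 q.2 = γ}) ?_
  rintro ⟨⟨a, b⟩, hab, habγ⟩ hne
  by_cases ha : a ∈ W
  · exfalso
    have hau : a ∈ S.unitSpace := hW ha
    have hsa : S.s a = a := S.s_of_unit' hau
    have hra : a = S.r b := by rw [← hab, hsa]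
    have hm : S.mul a b = b := by rw [hra, S.unit_mul]
    have hbγ : b = γ := by rw [← habγ, hm]
    have harγ : a = S.r γ := by rw [hra, hbγ]
    exact hne (Subtype.ext (by simp [harγ, hbγ]))
  · simp only [ind, Set.indicator_of_notMem ha, zero_mul]

end TopGroupoid

open TopGroupoid in
/-- If `G` is a topologically principal ample Hausdorff groupoid and
`R` a commutative integral domain with 1, then the diagonal
`D = A_R(G⁽⁰⁾)` is maximal abelian in `A_R(G)`: every `f ∈ A_R(G)` not
supported on the unit space fails to commute with some `1_W`, `W ⊆ G⁽⁰⁾`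
compact open. -/
theorem diagonal_maximal_abelian {G : Type*} [TopologicalSpace G] [T2Space G]
    (S : TopGroupoid G) (hS : S.Ample) (hP : S.TopPrincipal)
    {R : Type*} [CommRing R] [IsDomain R]
    (f : G → R) (hf : IsSteinbergFn f)
    (hfD : ¬ Function.support f ⊆ S.unitSpace) :
    ∃ W : Set G, IsCompact W ∧ IsOpen W ∧ W ⊆ S.unitSpace ∧
      S.conv f (ind W) ≠ S.conv (ind W) f := by
  obtain ⟨hEt, hAmp⟩ := hS
  by_cases hcase : ∃ γ, f γ ≠ 0 ∧ S.r γ ≠ S.s γ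
  · obtain ⟨γ, hfγ, hrs⟩ := hcase
    have hsγ : S.s γ ∈ S.unitSpace := ⟨S.inv γ, S.r_inv γ⟩
    obtain ⟨K, hKc, hKo, hKmem, hKsub, hKunit⟩ :=
      hAmp (S.s γ) hsγ ({S.r γ}ᶜ) isOpen_compl_singleton (by simpa using (Ne.symm hrs))
    refine ⟨K, hKc, hKo, hKunit, ?_⟩
    intro heq
    have h1 := S.conv_ind_right' f hKunit γ
    have h2 := S.conv_ind_left' f hKunit γ
    have hrγ : S.r γ ∉ K := fun h => (hKsub h) rfl
    have key : ind K (S.r γ) * f γ = f γ * ind K (S.s γ) := by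
      rw [← h2, ← heq, h1]
    have e1 : (ind K (S.r γ) : R) = 0 := Set.indicator_of_notMem hrγ 1
    have e2 : (ind K (S.s γ) : R) = 1 := Set.indicator_of_mem hKmem 1
    rw [e1, e2, zero_mul, mul_one] at key
    exact hfγ key.symm
  · exfalso
    push_neg at hcase
    obtain ⟨γ₀, hγ₀supp, hγ₀notU⟩ := Set.not_subset.mp hfD
    have hfγ₀ : f γ₀ ≠ 0 := hγ₀supp
    have hUclosed : IsClosed S.unitSpace := by
      have hset : S.unitSpace = {x | S.r x = x} := by
        ext x
        exact ⟨fun hx => S.r_of_unit' hx, fun hx => ⟨x, hx⟩⟩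
      rw [hset]
      exact isClosed_eq S.continuous_r continuous_id
    set V : Set G := f ⁻¹' {f γ₀} ∩ (S.unitSpace)ᶜ with hV
    have hVopen : IsOpen V := (hf.1 {f γ₀}).inter hUclosed.isOpen_compl
    have hγ₀V : γ₀ ∈ V := ⟨rfl, hγ₀notU⟩
    have hrV : IsOpen (S.r '' V) := hEt.1.isOpenMap V hVopen
    have hne : ((S.r '' V) ∩ S.unitSpace).Nonempty :=
      ⟨S.r γ₀, ⟨γ₀, hγ₀V, rfl⟩, ⟨γ₀, rfl⟩⟩
    obtain ⟨u, ⟨⟨γ, hγV, hrγu⟩, huU⟩, hTriv⟩ := hP (S.r '' V) hrV hne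
    have hfγ : f γ ≠ 0 := by
      have : f γ = f γ₀ := hγV.1
      rw [this]; exact hfγ₀
    have hrs : S.r γ = S.s γ := hcase γ hfγ
    have hγu : γ = u := hTriv γ hrγu (by rw [← hrs, hrγu])
    exact hγV.2 (hγu ▸ huU)
end

section
/- Let G be an ample Hausdorff groupoid and R a commutative integral domain with 1. Suppose f ∈ A_R(G) takes values in the units of R together with 0, and supp(f) is a local bisection. Define f*(γ) = f(γ⁻¹)⁻¹ if f(γ⁻¹) ≠ 0 and f*(γ) = 0 otherwise. Then f * f^* = 1_{r(supp f)} and f^* * f = 1_{s(supp f)}, and hence f f^* f = f and f^* f f^* = f^*. -/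
section Aux

open TopGroupoid

variable {G : Type*} [TopologicalSpace G] (S : TopGroupoid G)
variable {R : Type*} [CommRing R]

/-- Left unit law: convolving with the indicator of `r(supp g)` gives back `g`. -/
private theorem aux_conv_ind_left (g : G → R) :
    S.conv (ind (S.r '' Function.support g)) g = g := by
  funext γ
  set U : Set G := S.r '' Function.support g with hU
  have key : ∀ p : {q : G × G // S.s q.1 = S.r q.2 ∧ S.mul q.1 q.2 = γ},
      ind (R := R) U (p : G × G).1 * g (p : G × G).2 ≠ 0 →
      (p : G × G).1 = S.r γ ∧ (p : G × G).2 = γ := by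
    rintro ⟨⟨a, b⟩, hs, hm⟩ hne
    dsimp only at hs hm hne ⊢
    have ha : a ∈ U := by
      by_contra h
      simp [ind, Set.indicator_of_notMem h] at hne
    obtain ⟨α, hα, rfl⟩ := ha
    have h1 : S.r α = S.r b := by
      have h := S.s_r α; rw [h] at hs; exact hs
    have h2 : S.mul (S.r α) b = b := by rw [h1]; exact S.unit_mul b
    rw [h2] at hm
    subst hm
    exact ⟨by rw [h1], rfl⟩
  by_cases hγ : g γ = 0
  · rw [show g γ = 0 from hγ]
    apply finsum_eq_zero_of_forall_eq_zero
    intro p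
    by_contra hne
    exact hne (by rw [(key p hne).2, hγ, mul_zero])
  · have hmem : S.r γ ∈ U := ⟨γ, hγ, rfl⟩
    have hp0 : S.s ((S.r γ, γ) : G × G).1 = S.r ((S.r γ, γ) : G × G).2 ∧
        S.mul ((S.r γ, γ) : G × G).1 ((S.r γ, γ) : G × G).2 = γ :=
      ⟨S.s_r γ, S.unit_mul γ⟩
    have := finsum_eq_single
      (f := fun p : {q : G × G // S.s q.1 = S.r q.2 ∧ S.mul q.1 q.2 = γ} =>
        ind (R := R) U (p : G × G).1 * g (p : G × G).2)
      (a := ⟨(S.r γ, γ), hp0⟩)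
      (by
        intro p hp
        by_contra hne
        obtain ⟨h1, h2⟩ := key p hne
        exact hp (Subtype.ext (Prod.ext h1 h2)))
    rw [TopGroupoid.conv, this]
    simp [ind, Set.indicator_of_mem hmem]

/-- The value computation for `f * f⋆` : it is the indicator of `r(supp f)`. -/
private theorem aux_ff_star [IsDomain R] (f : G → R)
    (hunits : ∀ γ, f γ = 0 ∨ IsUnit (f γ))
    (hbis : S.IsBisection (Function.support f)) :
    S.conv f (fun γ => Ring.inverse (f (S.inv γ))) = ind (S.r '' Function.support f) := by
  funext γ
  set U : Set G := S.r '' Function.support f with hU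
  have key : ∀ p : {q : G × G // S.s q.1 = S.r q.2 ∧ S.mul q.1 q.2 = γ},
      f (p : G × G).1 * Ring.inverse (f (S.inv (p : G × G).2)) ≠ 0 →
      (p : G × G).1 ∈ Function.support f ∧ (p : G × G).2 = S.inv (p : G × G).1 ∧
        γ = S.r (p : G × G).1 := by
    rintro ⟨⟨a, b⟩, hs, hm⟩ hne
    dsimp only at hs hm hne ⊢
    have ha : f a ≠ 0 := fun h => hne (by rw [h, zero_mul])
    have hb : f (S.inv b) ≠ 0 := by
      intro h
      exact hne (by rw [h, Ring.inverse_zero, mul_zero])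
    have hseq : S.s a = S.s (S.inv b) := by rw [S.s_inv]; exact hs
    have hab : a = S.inv b := hbis.2 ha hb hseq
    have hb2 : b = S.inv a := by rw [hab, S.inv_inv']
    refine ⟨ha, hb2, ?_⟩
    rw [← hm, hb2, S.mul_inv]
  by_cases hγ : γ ∈ U
  · obtain ⟨α, hα, hrα⟩ := hγ
    have hp0 : S.s ((α, S.inv α) : G × G).1 = S.r ((α, S.inv α) : G × G).2 ∧
        S.mul ((α, S.inv α) : G × G).1 ((α, S.inv α) : G × G).2 = γ :=
      ⟨(S.r_inv α).symm, by rw [S.mul_inv]; exact hrα⟩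
    have hsingle := finsum_eq_single
      (f := fun p : {q : G × G // S.s q.1 = S.r q.2 ∧ S.mul q.1 q.2 = γ} =>
        f (p : G × G).1 * Ring.inverse (f (S.inv (p : G × G).2)))
      (a := ⟨(α, S.inv α), hp0⟩)
      (by
        intro p hp
        by_contra hne
        obtain ⟨h1, h2, h3⟩ := key p hne
        have hfst : (p : G × G).1 = α := hbis.1 h1 hα (by rw [← h3, hrα])
        exact hp (Subtype.ext (Prod.ext hfst (by rw [h2, hfst]))))
    rw [TopGroupoid.conv, hsingle]
    dsimp only
    have hαu : IsUnit (f α) := (hunits α).resolve_left hα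
    have : f (S.inv (S.inv α)) = f α := by rw [S.inv_inv']
    rw [this, Ring.mul_inverse_cancel _ hαu]
    simp [ind, Set.indicator_of_mem (show γ ∈ U from ⟨α, hα, hrα⟩)]
  · rw [ind, Set.indicator_of_notMem hγ]
    apply finsum_eq_zero_of_forall_eq_zero
    intro p
    by_contra hne
    obtain ⟨h1, _, h3⟩ := key p hne
    exact hγ ⟨(p : G × G).1, h1, h3.symm⟩

/-- The value computation for `f⋆ * f` : it is the indicator of `s(supp f)`. -/
private theorem aux_fstar_f [IsDomain R] (f : G → R)
    (hunits : ∀ γ, f γ = 0 ∨ IsUnit (f γ))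
    (hbis : S.IsBisection (Function.support f)) :
    S.conv (fun γ => Ring.inverse (f (S.inv γ))) f = ind (S.s '' Function.support f) := by
  funext γ
  set V : Set G := S.s '' Function.support f with hV
  have key : ∀ p : {q : G × G // S.s q.1 = S.r q.2 ∧ S.mul q.1 q.2 = γ},
      Ring.inverse (f (S.inv (p : G × G).1)) * f (p : G × G).2 ≠ 0 →
      (p : G × G).2 ∈ Function.support f ∧ (p : G × G).1 = S.inv (p : G × G).2 ∧
        γ = S.s (p : G × G).2 := by
    rintro ⟨⟨a, b⟩, hs, hm⟩ hne
    dsimp only at hs hm hne ⊢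
    have ha : f (S.inv a) ≠ 0 := by
      intro h
      exact hne (by rw [h, Ring.inverse_zero, zero_mul])
    have hb : f b ≠ 0 := fun h => hne (by rw [h, mul_zero])
    have hreq : S.r (S.inv a) = S.r b := by rw [S.r_inv]; exact hs
    have hab : S.inv a = b := hbis.1 ha hb hreq
    have ha2 : a = S.inv b := by rw [← hab, S.inv_inv']
    refine ⟨hb, ha2, ?_⟩
    rw [← hm, ha2, S.inv_mul]
  by_cases hγ : γ ∈ V
  · obtain ⟨α, hα, hsα⟩ := hγ
    have hp0 : S.s ((S.inv α, α) : G × G).1 = S.r ((S.inv α, α) : G × G).2 ∧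
        S.mul ((S.inv α, α) : G × G).1 ((S.inv α, α) : G × G).2 = γ :=
      ⟨S.s_inv α, by rw [S.inv_mul]; exact hsα⟩
    have hsingle := finsum_eq_single
      (f := fun p : {q : G × G // S.s q.1 = S.r q.2 ∧ S.mul q.1 q.2 = γ} =>
        Ring.inverse (f (S.inv (p : G × G).1)) * f (p : G × G).2)
      (a := ⟨(S.inv α, α), hp0⟩)
      (by
        intro p hp
        by_contra hne
        obtain ⟨h1, h2, h3⟩ := key p hne
        have hsnd : (p : G × G).2 = α := hbis.2 h1 hα (by rw [← h3, hsα])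
        exact hp (Subtype.ext (Prod.ext (by rw [h2, hsnd]) hsnd)))
    rw [TopGroupoid.conv, hsingle]
    dsimp only
    have hαu : IsUnit (f α) := (hunits α).resolve_left hα
    have : f (S.inv (S.inv α)) = f α := by rw [S.inv_inv']
    rw [this, Ring.inverse_mul_cancel _ hαu]
    simp [ind, Set.indicator_of_mem (show γ ∈ V from ⟨α, hα, hsα⟩)]
  · rw [ind, Set.indicator_of_notMem hγ]
    apply finsum_eq_zero_of_forall_eq_zero
    intro p
    by_contra hne
    obtain ⟨h1, _, h3⟩ := key p hne
    exact hγ ⟨(p : G × G).2, h1, h3.symm⟩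

end Aux

open TopGroupoid in
/-- If `f ∈ A_R(G)` takes values in `R^× ∪ {0}` and has local
bisection support, then with `f*(γ) = f(γ⁻¹)⁻¹` (and `0` where `f(γ⁻¹) = 0`) one
has `f f* = 1_{r(supp f)}`, `f* f = 1_{s(supp f)}`, `f f* f = f` and
`f* f f* = f*`. -/
theorem star_partial_isometry {G : Type*} [TopologicalSpace G] [T2Space G]
    (S : TopGroupoid G) (hS : S.Ample) {R : Type*} [CommRing R] [IsDomain R]
    (f : G → R) (hf : IsSteinbergFn f)
    (hunits : ∀ γ, f γ = 0 ∨ IsUnit (f γ))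
    (hbis : S.IsBisection (Function.support f))
    (fstar : G → R) (hfstar : fstar = fun γ => Ring.inverse (f (S.inv γ))) :
    S.conv f fstar = ind (S.r '' Function.support f) ∧
    S.conv fstar f = ind (S.s '' Function.support f) ∧
    S.conv (S.conv f fstar) f = f ∧
    S.conv (S.conv fstar f) fstar = fstar := by
  have hf1 : S.conv f fstar = ind (S.r '' Function.support f) := by
    rw [hfstar]; exact aux_ff_star S f hunits hbis
  have hf2 : S.conv fstar f = ind (S.s '' Function.support f) := by
    rw [hfstar]; exact aux_fstar_f S f hunits hbis
  have hsupp : S.r '' Function.support fstar = S.s '' Function.support f := by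
    ext x
    constructor
    · rintro ⟨γ, hγ, rfl⟩
      have : f (S.inv γ) ≠ 0 := by
        intro h
        apply hγ
        rw [hfstar]; simp [h]
      exact ⟨S.inv γ, this, S.s_inv γ⟩
    · rintro ⟨α, hα, rfl⟩
      refine ⟨S.inv α, ?_, S.r_inv α⟩
      rw [hfstar]
      simp only [Function.mem_support]
      rw [S.inv_inv']
      have hu : IsUnit (f α) := (hunits α).resolve_left hα
      intro h
      have h1 := Ring.mul_inverse_cancel _ hu
      rw [h, mul_zero] at h1
      exact one_ne_zero h1.symm
  refine ⟨hf1, hf2, ?_, ?_⟩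
  · rw [hf1]
    exact aux_conv_ind_left S f
  · rw [hf2, ← hsupp]
    exact aux_conv_ind_left S fstar
end

section
/- Let G be an ample Hausdorff groupoid and R a commutative integral domain with 1. If f, g ∈ A_R(G) take values in units-of-R-union-{0} and have local bisection supports, then (f*g)^* = g^* * f^*, where h^*(γ) := h(γ⁻¹)⁻¹ when h(γ⁻¹) ≠ 0 and 0 otherwise. -/
section Aux
open TopGroupoid

variable {G : Type*} [TopologicalSpace G] (S : TopGroupoid G)

/-- Inversion is anti-multiplicative. -/
theorem TopGroupoid.inv_mul_rev {a b : G} (h : S.s a = S.r b) :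
    S.inv (S.mul a b) = S.mul (S.inv b) (S.inv a) := by
  have hba : S.s (S.inv b) = S.r (S.inv a) := by rw [S.s_inv, S.r_inv, h]
  have hrx : S.r (S.mul (S.inv b) (S.inv a)) = S.s b := by
    rw [S.r_mul _ _ hba, S.r_inv]
  have hcx : S.mul (S.mul a b) (S.mul (S.inv b) (S.inv a)) = S.r a := by
    rw [S.mul_assoc' a b _ h (by rw [hrx]),
      ← S.mul_assoc' b (S.inv b) (S.inv a) (S.r_inv b).symm
        (by rw [S.s_inv, S.r_inv, h]),
      S.mul_inv, ← h, ← S.r_inv a, S.unit_mul, S.mul_inv]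
  have hsc : S.s (S.mul a b) = S.s b := S.s_mul _ _ h
  calc S.inv (S.mul a b)
      = S.mul (S.inv (S.mul a b)) (S.r (S.mul a b)) := by
        rw [← S.s_inv (S.mul a b), S.mul_unit]
    _ = S.mul (S.inv (S.mul a b))
        (S.mul (S.mul a b) (S.mul (S.inv b) (S.inv a))) := by
        rw [hcx, S.r_mul _ _ h]
    _ = S.mul (S.mul (S.inv (S.mul a b)) (S.mul a b)) (S.mul (S.inv b) (S.inv a)) := by
        rw [S.mul_assoc' _ _ _ (S.s_inv _) (by rw [hsc, hrx])]
    _ = S.mul (S.inv b) (S.inv a) := by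
        rw [S.inv_mul, hsc, ← hrx, S.unit_mul]

/-- Unique factorization over bisections. -/
theorem TopGroupoid.factor_unique {R : Type*} [MulZeroClass R] [NoZeroDivisors R]
    {f g : G → R}
    (hfb : S.IsBisection (Function.support f)) (hgb : S.IsBisection (Function.support g))
    {a b a' b' : G} (hc : S.s a = S.r b) (hc' : S.s a' = S.r b')
    (hm : S.mul a b = S.mul a' b')
    (ha : f a ≠ 0) (hb : g b ≠ 0) (ha' : f a' ≠ 0) (hb' : g b' ≠ 0) :
    a = a' ∧ b = b' := by
  have hra : S.r a = S.r a' := by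
    rw [← S.r_mul a b hc, ← S.r_mul a' b' hc', hm]
  have haa : a = a' := hfb.1 ha ha' hra
  subst haa
  refine ⟨rfl, ?_⟩
  have key : ∀ c : G, S.s a = S.r c →
      S.mul (S.inv a) (S.mul a c) = c := by
    intro c hcc
    rw [← S.mul_assoc' _ _ _ (S.s_inv a) hcc, S.inv_mul, hcc, S.unit_mul]
  rw [← key b hc, ← key b' hc', hm]

end Aux

open TopGroupoid in
/-- For `f, g ∈ A_R(G)` with unit-or-zero values and local
bisection supports, `(f*g)^* = g^* * f^*`, where `h^*(γ) = h(γ⁻¹)⁻¹` when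
`h(γ⁻¹) ≠ 0` and `0` otherwise. -/
theorem star_antimultiplicative {G : Type*} [TopologicalSpace G] [T2Space G]
    (S : TopGroupoid G) (hS : S.Ample) {R : Type*} [CommRing R] [IsDomain R]
    (f g : G → R) (hf : IsSteinbergFn f) (hg : IsSteinbergFn g)
    (hfu : ∀ γ, f γ = 0 ∨ IsUnit (f γ)) (hgu : ∀ γ, g γ = 0 ∨ IsUnit (g γ))
    (hfb : S.IsBisection (Function.support f))
    (hgb : S.IsBisection (Function.support g)) :
    (fun γ => Ring.inverse (S.conv f g (S.inv γ)))
      = S.conv (fun γ => Ring.inverse (g (S.inv γ)))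
               (fun γ => Ring.inverse (f (S.inv γ))) := by
  funext γ
  classical
  -- value of star functions
  by_cases hex : ∃ p : G × G, S.s p.1 = S.r p.2 ∧ S.mul p.1 p.2 = S.inv γ ∧
      f p.1 ≠ 0 ∧ g p.2 ≠ 0
  · obtain ⟨⟨α, β⟩, hc, hm, hfa, hgb2⟩ := hex
    dsimp only at hc hm hfa hgb2
    have hconv : S.conv f g (S.inv γ) = f α * g β := by
      have huniq0 : ∀ x : {q : G × G // S.s q.1 = S.r q.2 ∧ S.mul q.1 q.2 = S.inv γ},
          x ≠ ⟨(α, β), hc, hm⟩ → f (x : G × G).1 * g (x : G × G).2 = 0 := by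
        rintro ⟨⟨a, b⟩, hc', hm'⟩ hne
        dsimp only at hc' hm' ⊢
        by_contra hz
        have ha : f a ≠ 0 := fun h => hz (by simp [h])
        have hb : g b ≠ 0 := fun h => hz (by simp [h])
        obtain ⟨h1, h2⟩ := S.factor_unique hfb hgb hc' hc (hm'.trans hm.symm) ha hb hfa hgb2
        exact hne (by simp [h1, h2])
      exact finsum_eq_single
        (fun p : {q : G × G // S.s q.1 = S.r q.2 ∧ S.mul q.1 q.2 = S.inv γ} =>
          f (p : G × G).1 * g (p : G × G).2) ⟨(α, β), hc, hm⟩ huniq0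
    have hcγ : S.s (S.inv β) = S.r (S.inv α) := by rw [S.s_inv, S.r_inv, hc]
    have hmγ : S.mul (S.inv β) (S.inv α) = γ := by
      rw [← S.inv_mul_rev hc, hm, S.inv_inv']
    have hrhs : S.conv (fun γ => Ring.inverse (g (S.inv γ)))
        (fun γ => Ring.inverse (f (S.inv γ))) γ
        = Ring.inverse (g β) * Ring.inverse (f α) := by
      have huniq : ∀ x : {q : G × G // S.s q.1 = S.r q.2 ∧ S.mul q.1 q.2 = γ},
          x ≠ ⟨(S.inv β, S.inv α), hcγ, hmγ⟩ →
          Ring.inverse (g (S.inv (x : G × G).1)) * Ring.inverse (f (S.inv (x : G × G).2))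
            = 0 := by
        rintro ⟨⟨a, b⟩, hc', hm'⟩ hne
        dsimp only at hc' hm' ⊢
        by_contra hz
        have ha : g (S.inv a) ≠ 0 := by
          intro h; exact hz (by simp [h, Ring.inverse_zero])
        have hb : f (S.inv b) ≠ 0 := by
          intro h; exact hz (by simp [h, Ring.inverse_zero])
        have hcc : S.s (S.inv b) = S.r (S.inv a) := by rw [S.s_inv, S.r_inv, hc']
        have hmm : S.mul (S.inv b) (S.inv a) = S.mul α β := by
          rw [← S.inv_mul_rev hc', hm', ← hm]
        obtain ⟨h1, h2⟩ := S.factor_unique hfb hgb hcc hc hmm hb ha hfa hgb2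
        apply hne
        have e1 : a = S.inv β := by rw [← h2, S.inv_inv']
        have e2 : b = S.inv α := by rw [← h1, S.inv_inv']
        simp [e1, e2]
      have key := finsum_eq_single
        (fun p : {q : G × G // S.s q.1 = S.r q.2 ∧ S.mul q.1 q.2 = γ} =>
          Ring.inverse (g (S.inv (p : G × G).1)) * Ring.inverse (f (S.inv (p : G × G).2)))
        ⟨(S.inv β, S.inv α), hcγ, hmγ⟩ huniq
      simpa [TopGroupoid.conv, S.inv_inv'] using key
    rw [hconv, hrhs, Ring.mul_inverse_rev]
  · push_neg at hex
    have hconv : S.conv f g (S.inv γ) = 0 := by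
      refine finsum_eq_zero_of_forall_eq_zero ?_
      rintro ⟨⟨a, b⟩, hc, hm⟩
      by_contra hz
      have ha : f a ≠ 0 := fun h => hz (by simp [h])
      have hb : g b ≠ 0 := fun h => hz (by simp [h])
      exact hb (hex (a, b) hc hm ha)
    have hrhs : S.conv (fun γ => Ring.inverse (g (S.inv γ)))
        (fun γ => Ring.inverse (f (S.inv γ))) γ = 0 := by
      refine finsum_eq_zero_of_forall_eq_zero ?_
      rintro ⟨⟨a, b⟩, hc, hm⟩
      by_contra hz
      have ha : g (S.inv a) ≠ 0 := by
        intro h; exact hz (by simp [h, Ring.inverse_zero])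
      have hb : f (S.inv b) ≠ 0 := by
        intro h; exact hz (by simp [h, Ring.inverse_zero])
      have hcc : S.s (S.inv b) = S.r (S.inv a) := by rw [S.s_inv, S.r_inv, hc]
      have hmm : S.mul (S.inv b) (S.inv a) = S.inv γ := by
        rw [← S.inv_mul_rev hc, hm]
      exact ha (hex (S.inv b, S.inv a) hcc hmm hb)
    rw [hconv, hrhs, Ring.inverse_zero]
end

section
/- Let G be an ample Hausdorff groupoid, Γ a discrete group, c : G → Γ a continuous cocycle, and R a commutative ring with 1. Setting A_R(G)_g = {f ∈ A_R(G) : supp(f) ⊆ c⁻¹(g)}, one has A_R(G) = ⊕_{g∈Γ} A_R(G)_g as R-modules, and A_R(G)_g * A_R(G)_h ⊆ A_R(G)_{gh} for all g, h ∈ Γ; i.e., this defines a Γ-grading of the Steinberg algebra. -/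
/-- A continuous cocycle `c : G → Γ` into a discrete group induces
a `Γ`-grading of the Steinberg algebra: every `f ∈ A_R(G)` is the (pointwise,
finitely supported) sum of its homogeneous components `f|_{c⁻¹(g)}`, each of
which lies in `A_R(G)`; this decomposition into functions supported on the
`c⁻¹(g)` is unique; and homogeneous components multiply according to
`A_R(G)_g * A_R(G)_h ⊆ A_R(G)_{gh}`. -/
theorem steinberg_grading {G : Type*} [TopologicalSpace G] [T2Space G]
    (S : TopGroupoid G) (hS : S.Ample)
    {Γ : Type*} [Group Γ] [TopologicalSpace Γ] [DiscreteTopology Γ]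
    (c : G → Γ) (hc : Continuous c)
    (hcoc : ∀ a b, S.s a = S.r b → c (S.mul a b) = c a * c b)
    {R : Type*} [CommRing R] :
    (∀ f : G → R, TopGroupoid.IsSteinbergFn f →
      (∀ g : Γ, TopGroupoid.IsSteinbergFn ((c ⁻¹' {g}).indicator f)) ∧
      {g : Γ | (c ⁻¹' {g}).indicator f ≠ 0}.Finite ∧
      (∀ γ, f γ = ∑ᶠ g : Γ, (c ⁻¹' {g}).indicator f γ) ∧
      (∀ h : Γ → G → R, (∀ g, Function.support (h g) ⊆ c ⁻¹' {g}) →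
        (∀ γ, f γ = ∑ᶠ g : Γ, h g γ) → ∀ g, h g = (c ⁻¹' {g}).indicator f)) ∧
    (∀ (f₁ f₂ : G → R) (g h : Γ), TopGroupoid.IsSteinbergFn f₁ →
      TopGroupoid.IsSteinbergFn f₂ →
      Function.support f₁ ⊆ c ⁻¹' {g} → Function.support f₂ ⊆ c ⁻¹' {h} →
      Function.support (S.conv f₁ f₂) ⊆ c ⁻¹' {g * h}) := by
  classical
  have hcl : IsLocallyConstant c := (IsLocallyConstant.iff_continuous c).2 hc
  have hmemiff : ∀ (γ : G) (g : Γ), γ ∈ c ⁻¹' {g} ↔ c γ = g := by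
    intro γ g; simp
  constructor
  · intro f hf
    refine ⟨?_, ?_, ?_, ?_⟩
    · intro g
      constructor
      · have h1 : IsLocallyConstant (fun γ => if c γ = g then (1:R) else 0) :=
          hcl.comp (fun x => if x = g then (1:R) else 0)
        have := h1.mul hf.1
        convert this using 1
        funext γ
        by_cases hγ : c γ = g <;>
          simp [Set.indicator_apply, hγ, hmemiff]
      · have h2 : Function.support ((c ⁻¹' {g}).indicator f)
            = c ⁻¹' {g} ∩ Function.support f := Set.support_indicator
        rw [h2]
        exact hf.2.inter_left ((isClosed_discrete ({g} : Set Γ)).preimage hc)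
    · apply (hf.2.image hc).finite_of_discrete.subset
      intro g hg
      simp only [Set.mem_setOf_eq, Ne, funext_iff, not_forall] at hg
      obtain ⟨γ, hγ⟩ := hg
      have hγmem : γ ∈ c ⁻¹' {g} := by
        by_contra hmem
        exact hγ (by rw [Set.indicator_of_notMem hmem f]; rfl)
      refine ⟨γ, ?_, (hmemiff γ g).1 hγmem⟩
      intro h0
      exact hγ (by rw [Set.indicator_of_mem hγmem f, h0]; rfl)
    · intro γ
      rw [finsum_eq_single _ (c γ)]
      · rw [Set.indicator_of_mem (show γ ∈ c ⁻¹' {c γ} from rfl) f]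
      · intro g hg
        apply Set.indicator_of_notMem
        rw [hmemiff]
        exact Ne.symm hg
    · intro h hsupp hsum g
      funext γ
      by_cases hγ : c γ = g
      · have hmem : γ ∈ c ⁻¹' {g} := (hmemiff γ g).2 hγ
        rw [Set.indicator_of_mem hmem f, hsum γ, finsum_eq_single _ g]
        intro g' hg'
        by_contra h0
        have := (hmemiff γ g').1 (hsupp g' h0)
        exact hg' (this.symm.trans hγ)
      · rw [Set.indicator_of_notMem (fun hm => hγ ((hmemiff γ g).1 hm))]
        by_contra h0
        exact hγ ((hmemiff γ g).1 (hsupp g h0))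
  · intro f₁ f₂ g h hf₁ hf₂ hs₁ hs₂ γ hγ
    have hex : ∃ p : {q : G × G // S.s q.1 = S.r q.2 ∧ S.mul q.1 q.2 = γ},
        f₁ (p : G × G).1 * f₂ (p : G × G).2 ≠ 0 := by
      by_contra hall
      push_neg at hall
      exact hγ (finsum_eq_zero_of_forall_eq_zero hall)
    obtain ⟨⟨⟨a, b⟩, hab, habγ⟩, hne⟩ := hex
    have ha : f₁ a ≠ 0 := fun h0 => hne (by simp [h0])
    have hb : f₂ b ≠ 0 := fun h0 => hne (by simp [h0])
    have hca : c a = g := (hmemiff a g).1 (hs₁ ha)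
    have hcb : c b = h := (hmemiff b h).1 (hs₂ hb)
    rw [hmemiff, ← habγ, hcoc a b hab, hca, hcb]
end
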